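/- For d ≥ 3, the distributional bi-Laplacian of a(x) = |x| on ℝ^d is nonpositive: for every nonnegative test function φ ∈ C_c^∞(ℝ^d), ∫ |x| · Δ²φ(x) dx ≤ 0. -/

import Mathlib

open MeasureTheory Real

/-- Second partial derivative `∂_j ∂_k f` on `ℝ^d`. -/
noncomputable def secondPartial {d : ℕ} (f : EuclideanSpace ℝ (Fin d) → ℝ) (j k : Fin d)
    (x : EuclideanSpace ℝ (Fin d)) : ℝ :=
  fderiv ℝ (fun y => fderiv ℝ f y (EuclideanSpace.single k (1 : ℝ))) x
    (EuclideanSpace.single j (1 : ℝ))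

/-- The Laplacian `Δf = ∑_j ∂_j² f` on `ℝ^d`. -/
noncomputable def lapl {d : ℕ} (f : EuclideanSpace ℝ (Fin d) → ℝ)
    (x : EuclideanSpace ℝ (Fin d)) : ℝ :=
  ∑ j : Fin d, secondPartial f j j x

namespace BiLap
variable {d : ℕ}

abbrev Ed (d : ℕ) := EuclideanSpace ℝ (Fin d)

/-! ### Radial calculus -/

lemma normsq_eq_sum (x : Ed d) : ‖x‖ ^ 2 = ∑ i, x i ^ 2 := by
  rw [EuclideanSpace.norm_eq, sq_sqrt (by positivity)]
  simp [sq_abs]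

lemma hasFDerivAt_normsq (x : Ed d) :
    HasFDerivAt (fun y : Ed d => ‖y‖ ^ 2) (2 • (innerSL ℝ x)) x :=
  (hasStrictFDerivAt_norm_sq x).hasFDerivAt

lemma innerSL_single (x : Ed d) (k : Fin d) :
    (innerSL ℝ x) (EuclideanSpace.single k (1:ℝ)) = x k := by
  simp [EuclideanSpace.inner_single_right]

section Radial
variable {u u1 u2 : ℝ → ℝ}

lemma radial_hasFDerivAt (h1 : ∀ t, 0 ≤ t → HasDerivAt u (u1 t) t) (y : Ed d) :
    HasFDerivAt (fun z : Ed d => u (‖z‖ ^ 2))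
      ((u1 (‖y‖ ^ 2)) • ((2:ℕ) • (innerSL ℝ y))) y :=
  (h1 _ (sq_nonneg _)).comp_hasFDerivAt y (hasFDerivAt_normsq y)

lemma radial_differentiable (h1 : ∀ t, 0 ≤ t → HasDerivAt u (u1 t) t) :
    Differentiable ℝ (fun z : Ed d => u (‖z‖ ^ 2)) :=
  fun y => (radial_hasFDerivAt h1 y).differentiableAt

lemma partial_radial (h1 : ∀ t, 0 ≤ t → HasDerivAt u (u1 t) t) (k : Fin d) :
    (fun y : Ed d => fderiv ℝ (fun z : Ed d => u (‖z‖ ^ 2)) y (EuclideanSpace.single k (1:ℝ)))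
      = fun y => u1 (‖y‖ ^ 2) * (2 * y k) := by
  funext y
  rw [(radial_hasFDerivAt h1 y).fderiv]
  simp [innerSL_single, two_smul]
  ring

lemma radial_partial_hasFDerivAt (h2 : ∀ t, 0 ≤ t → HasDerivAt u1 (u2 t) t)
    (x : Ed d) (k : Fin d) :
    HasFDerivAt (fun y : Ed d => u1 (‖y‖ ^ 2) * (2 * y k))
      ((u1 (‖x‖ ^ 2)) • ((2:ℝ) • (EuclideanSpace.proj k : Ed d →L[ℝ] ℝ))
        + (2 * x k) • ((u2 (‖x‖ ^ 2)) • ((2:ℕ) • (innerSL ℝ x)))) x := by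
  have hA : HasFDerivAt (fun y : Ed d => u1 (‖y‖ ^ 2))
      ((u2 (‖x‖ ^ 2)) • ((2:ℕ) • (innerSL ℝ x))) x :=
    (h2 _ (sq_nonneg _)).comp_hasFDerivAt x (hasFDerivAt_normsq x)
  have hB : HasFDerivAt (fun y : Ed d => 2 * y k)
      ((2:ℝ) • (EuclideanSpace.proj k : Ed d →L[ℝ] ℝ)) x :=
    (EuclideanSpace.proj k : Ed d →L[ℝ] ℝ).hasFDerivAt.const_mul 2
  exact hA.mul hB

lemma radial_partial_differentiable (h1 : ∀ t, 0 ≤ t → HasDerivAt u (u1 t) t)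
    (h2 : ∀ t, 0 ≤ t → HasDerivAt u1 (u2 t) t) (k : Fin d) :
    Differentiable ℝ
      (fun y : Ed d => fderiv ℝ (fun z : Ed d => u (‖z‖ ^ 2)) y
        (EuclideanSpace.single k (1:ℝ))) := by
  rw [partial_radial h1 k]
  exact fun x => (radial_partial_hasFDerivAt h2 x k).differentiableAt

lemma secondPartial_radial (h1 : ∀ t, 0 ≤ t → HasDerivAt u (u1 t) t)
    (h2 : ∀ t, 0 ≤ t → HasDerivAt u1 (u2 t) t) (j : Fin d) (x : Ed d) :
    secondPartial (fun z : Ed d => u (‖z‖ ^ 2)) j j x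
      = u2 (‖x‖ ^ 2) * (2 * x j) ^ 2 + u1 (‖x‖ ^ 2) * 2 := by
  unfold secondPartial
  rw [partial_radial h1 j, (radial_partial_hasFDerivAt h2 x j).fderiv]
  simp [innerSL_single, two_smul, EuclideanSpace.single_apply]
  ring

lemma lapl_radial (h1 : ∀ t, 0 ≤ t → HasDerivAt u (u1 t) t)
    (h2 : ∀ t, 0 ≤ t → HasDerivAt u1 (u2 t) t) (x : Ed d) :
    lapl (fun z : Ed d => u (‖z‖ ^ 2)) x
      = 4 * ‖x‖ ^ 2 * u2 (‖x‖ ^ 2) + 2 * d * u1 (‖x‖ ^ 2) := by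
  unfold lapl
  have h : ∀ j : Fin d, secondPartial (fun z : Ed d => u (‖z‖ ^ 2)) j j x
      = u2 (‖x‖ ^ 2) * (2 * x j) ^ 2 + u1 (‖x‖ ^ 2) * 2 :=
    fun j => secondPartial_radial h1 h2 j x
  rw [Finset.sum_congr rfl (fun j _ => h j)]
  rw [Finset.sum_add_distrib, Finset.sum_const]
  have hsum : ∑ j : Fin d, u2 (‖x‖ ^ 2) * (2 * x j) ^ 2
      = 4 * u2 (‖x‖ ^ 2) * ∑ j, x j ^ 2 := by
    rw [Finset.mul_sum]; congr 1; funext j; ring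
  rw [hsum, ← normsq_eq_sum]
  simp [Finset.card_univ]
  ring

end Radial

/-! ### 1-dimensional auxiliary functions -/

noncomputable def U0 (ε t : ℝ) : ℝ := sqrt (t + ε ^ 2)
noncomputable def U1 (ε t : ℝ) : ℝ := (2 * sqrt (t + ε ^ 2))⁻¹
noncomputable def U2 (ε t : ℝ) : ℝ := -((4 * sqrt (t + ε ^ 2) ^ 3)⁻¹)
noncomputable def U3 (ε t : ℝ) : ℝ := 3 * (8 * sqrt (t + ε ^ 2) ^ 5)⁻¹
noncomputable def U4 (ε t : ℝ) : ℝ := -(15 * (16 * sqrt (t + ε ^ 2) ^ 7)⁻¹)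

noncomputable def V0 (d : ℕ) (ε t : ℝ) : ℝ := 4 * t * U2 ε t + 2 * d * U1 ε t
noncomputable def V1 (d : ℕ) (ε t : ℝ) : ℝ := 4 * U2 ε t + 4 * t * U3 ε t + 2 * d * U2 ε t
noncomputable def V2 (d : ℕ) (ε t : ℝ) : ℝ := 8 * U3 ε t + 4 * t * U4 ε t + 2 * d * U3 ε t

section deriv
variable {ε : ℝ}

lemma sqrt_pos' (hε : 0 < ε) {t : ℝ} (ht : 0 ≤ t) : 0 < sqrt (t + ε ^ 2) :=
  Real.sqrt_pos.2 (by positivity)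

lemma sq_sqrt' (hε : 0 < ε) {t : ℝ} (ht : 0 ≤ t) : sqrt (t + ε ^ 2) ^ 2 = t + ε ^ 2 :=
  Real.sq_sqrt (by positivity)

lemma hasDerivAt_W (hε : 0 < ε) {t : ℝ} (ht : 0 ≤ t) :
    HasDerivAt (fun s => sqrt (s + ε ^ 2)) ((2 * sqrt (t + ε ^ 2))⁻¹) t := by
  have h0 : t + ε ^ 2 ≠ 0 := by positivity
  have h := (Real.hasDerivAt_sqrt h0).comp t ((hasDerivAt_id t).add_const (ε ^ 2))
  convert h using 1 <;> first | rfl | simp [one_div]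

lemma hasDerivAt_U0 (hε : 0 < ε) {t : ℝ} (ht : 0 ≤ t) :
    HasDerivAt (U0 ε) (U1 ε t) t := hasDerivAt_W hε ht

lemma hasDerivAt_U1 (hε : 0 < ε) {t : ℝ} (ht : 0 ≤ t) :
    HasDerivAt (U1 ε) (U2 ε t) t := by
  have hW := sqrt_pos' hε ht
  have h : HasDerivAt (fun s => 2 * sqrt (s + ε ^ 2))
      (2 * (2 * sqrt (t + ε ^ 2))⁻¹) t := (hasDerivAt_W hε ht).const_mul 2
  have h2 := h.inv (by positivity)
  convert h2 using 1 <;> try rfl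
  have hW2 := sq_sqrt' hε ht
  simp only [U2]
  field_simp
  ring

lemma hasDerivAt_U2 (hε : 0 < ε) {t : ℝ} (ht : 0 ≤ t) :
    HasDerivAt (U2 ε) (U3 ε t) t := by
  have hW := sqrt_pos' hε ht
  have h : HasDerivAt (fun s => 4 * sqrt (s + ε ^ 2) ^ 3)
      (4 * (3 * sqrt (t + ε ^ 2) ^ 2 * (2 * sqrt (t + ε ^ 2))⁻¹)) t :=
    (((hasDerivAt_W hε ht).pow 3).const_mul 4).congr_deriv (by ring)
  have h2 := (h.inv (by positivity)).neg
  convert h2 using 1 <;> try rfl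
  have hW2 := sq_sqrt' hε ht
  simp only [U3]
  field_simp
  linear_combination

lemma hasDerivAt_U3 (hε : 0 < ε) {t : ℝ} (ht : 0 ≤ t) :
    HasDerivAt (U3 ε) (U4 ε t) t := by
  have hW := sqrt_pos' hε ht
  have h : HasDerivAt (fun s => 8 * sqrt (s + ε ^ 2) ^ 5)
      (8 * (5 * sqrt (t + ε ^ 2) ^ 4 * (2 * sqrt (t + ε ^ 2))⁻¹)) t :=
    (((hasDerivAt_W hε ht).pow 5).const_mul 8).congr_deriv (by ring)
  have h2 := ((h.inv (by positivity)).const_mul 3)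
  convert h2 using 1 <;> try rfl
  have hW2 := sq_sqrt' hε ht
  simp only [U4]
  field_simp
  ring

lemma hasDerivAt_V0 (hε : 0 < ε) {t : ℝ} (ht : 0 ≤ t) :
    HasDerivAt (V0 d ε) (V1 d ε t) t := by
  have h1 : HasDerivAt (fun s => 4 * s * U2 ε s + 2 * (d:ℝ) * U1 ε s)
      (4 * 1 * U2 ε t + 4 * t * U3 ε t + 2 * d * U2 ε t) t := by
    have hA : HasDerivAt (fun s : ℝ => 4 * s) 4 t := by
      simpa using (hasDerivAt_id t).const_mul 4
    have := hA.mul (hasDerivAt_U2 hε ht)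
    have hB := (hasDerivAt_U1 hε ht).const_mul (2 * (d:ℝ))
    exact (this.add hB).congr_deriv (by ring)
  exact h1.congr_deriv (by unfold V1; ring)

lemma hasDerivAt_V1 (hε : 0 < ε) {t : ℝ} (ht : 0 ≤ t) :
    HasDerivAt (V1 d ε) (V2 d ε t) t := by
  have hA : HasDerivAt (fun s : ℝ => 4 * s) 4 t := by
    simpa using (hasDerivAt_id t).const_mul 4
  have h1 := ((hasDerivAt_U2 hε ht).const_mul 4).add
    ((hA.mul (hasDerivAt_U3 hε ht)).add ((hasDerivAt_U2 hε ht).const_mul (2 * (d:ℝ))))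
  have h2 : HasDerivAt (fun s => 4 * U2 ε s + (4 * s * U3 ε s + 2 * (d:ℝ) * U2 ε s))
      (4 * U3 ε t + (4 * 1 * U3 ε t + 4 * t * U4 ε t + 2 * d * U3 ε t)) t :=
    h1.congr_deriv (by ring)
  have h3 : V1 d ε = fun s => 4 * U2 ε s + (4 * s * U3 ε s + 2 * (d:ℝ) * U2 ε s) := by
    funext s; unfold V1; ring
  rw [h3]
  exact h2.congr_deriv (by unfold V2; ring)

/-- The key sign computation: the bi-Laplacian of the regularized radial profile
is everywhere nonpositive when `d ≥ 3`. -/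
lemma key_nonpos (hε : 0 < ε) (hd : 3 ≤ d) {t : ℝ} (ht : 0 ≤ t) :
    4 * t * V2 d ε t + 2 * d * V1 d ε t ≤ 0 := by
  have hW : 0 < sqrt (t + ε ^ 2) := sqrt_pos' hε ht
  set W := sqrt (t + ε ^ 2) with hWdef
  have hW2 : W ^ 2 = t + ε ^ 2 := sq_sqrt' hε ht
  have htW : t = W ^ 2 - ε ^ 2 := by linarith
  have hd3 : (3:ℝ) ≤ (d:ℝ) := by exact_mod_cast hd
  have key : 4 * t * V2 d ε t + 2 * d * V1 d ε t
      = -(((d:ℝ) - 1) * ((d:ℝ) - 3) * W ^ 4 + 6 * ((d:ℝ) - 3) * W ^ 2 * ε ^ 2 + 15 * ε ^ 4)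
        / W ^ 7 := by
    simp only [V1, V2, U2, U3, U4]
    rw [← hWdef, htW]
    field_simp
    ring
  rw [key]
  apply div_nonpos_of_nonpos_of_nonneg _ (pow_nonneg hW.le 7)
  have h1 : 0 ≤ ((d:ℝ) - 1) * ((d:ℝ) - 3) * W ^ 4 :=
    mul_nonneg (mul_nonneg (by linarith) (by linarith)) (pow_nonneg hW.le 4)
  have h2 : 0 ≤ 6 * ((d:ℝ) - 3) * W ^ 2 * ε ^ 2 :=
    mul_nonneg (mul_nonneg (mul_nonneg (by norm_num) (by linarith)) (sq_nonneg W)) (sq_nonneg ε)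
  have h3 : (0:ℝ) ≤ 15 * ε ^ 4 := by positivity
  linarith

end deriv

/-! ### Smoothness and support of derivatives of the test function -/

section Smooth
variable {φ : Ed d → ℝ}

lemma partial_contDiff (hφ : ContDiff ℝ (⊤ : ℕ∞) φ) (k : Fin d) :
    ContDiff ℝ (⊤ : ℕ∞) (fun y : Ed d => fderiv ℝ φ y (EuclideanSpace.single k (1:ℝ))) :=
  (hφ.fderiv_right (by simp)).clm_apply contDiff_const

lemma sp_contDiff (hφ : ContDiff ℝ (⊤ : ℕ∞) φ) (j k : Fin d) :
    ContDiff ℝ (⊤ : ℕ∞) (secondPartial φ j k) :=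
  ((partial_contDiff hφ k).fderiv_right (by simp)).clm_apply contDiff_const

lemma lapl_contDiff (hφ : ContDiff ℝ (⊤ : ℕ∞) φ) : ContDiff ℝ (⊤ : ℕ∞) (lapl φ) :=
  ContDiff.sum fun j _ => sp_contDiff hφ j j

lemma partial_hcs (hc : HasCompactSupport φ) (k : Fin d) :
    HasCompactSupport (fun y : Ed d => fderiv ℝ φ y (EuclideanSpace.single k (1:ℝ))) :=
  HasCompactSupport.fderiv_apply (𝕜 := ℝ) hc _

lemma sp_hcs (hc : HasCompactSupport φ) (j k : Fin d) :
    HasCompactSupport (secondPartial φ j k) :=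
  HasCompactSupport.fderiv_apply (𝕜 := ℝ) (partial_hcs hc k) _

lemma lapl_hcs (hc : HasCompactSupport φ) : HasCompactSupport (lapl φ) := by
  have h : ∀ j : Fin d, HasCompactSupport (secondPartial φ j j) := fun j => sp_hcs hc j j
  classical
  have h2 : HasCompactSupport (fun x : Ed d => ∑ j : Fin d, secondPartial φ j j x) := by
    induction (Finset.univ : Finset (Fin d)) using Finset.induction with
    | empty => simpa using (by simp [HasCompactSupport, tsupport] :
        HasCompactSupport (fun _ : Ed d => (0:ℝ)))
    | insert _ _ hj ih =>
        simp only [Finset.sum_insert hj]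
        exact (h _).add ih
  exact h2
end Smooth

/-! ### Integration by parts -/

section IBP
variable (f g : Ed d → ℝ)

lemma ibp_sp (j : Fin d)
    (hfd : Differentiable ℝ f)
    (hfd1 : Differentiable ℝ (fun y : Ed d => fderiv ℝ f y (EuclideanSpace.single j (1:ℝ))))
    (hf2c : Continuous (secondPartial f j j))
    (hg : ContDiff ℝ (⊤ : ℕ∞) g) (hgc : HasCompactSupport g) :
    ∫ x : Ed d, f x * secondPartial g j j x = ∫ x : Ed d, secondPartial f j j x * g x := by
  set v := EuclideanSpace.single j (1:ℝ) with hv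
  set g1 : Ed d → ℝ := fun y => fderiv ℝ g y v with hg1
  set f1 : Ed d → ℝ := fun y => fderiv ℝ f y v with hf1
  have hg1s : ContDiff ℝ (⊤ : ℕ∞) g1 := partial_contDiff hg j
  have hg1c : HasCompactSupport g1 := HasCompactSupport.fderiv_apply (𝕜 := ℝ) hgc v
  have hg2c : HasCompactSupport (fun y : Ed d => fderiv ℝ g1 y v) :=
    HasCompactSupport.fderiv_apply (𝕜 := ℝ) hg1c v
  have hg2cont : Continuous (fun y : Ed d => fderiv ℝ g1 y v) := (sp_contDiff hg j j).continuous
  have step1 : ∫ x : Ed d, f x * fderiv ℝ g1 x v = - ∫ x : Ed d, fderiv ℝ f x v * g1 x := by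
    apply integral_mul_fderiv_eq_neg_fderiv_mul_of_integrable
    · exact ((hfd1.continuous.mul hg1s.continuous).integrable_of_hasCompactSupport
        (hg1c.mul_left))
    · exact ((hfd.continuous.mul hg2cont).integrable_of_hasCompactSupport (hg2c.mul_left))
    · exact ((hfd.continuous.mul hg1s.continuous).integrable_of_hasCompactSupport
        (hg1c.mul_left))
    · exact fun x _ => hfd x
    · exact fun x _ => hg1s.differentiable (by simp) x
  have step2 : ∫ x : Ed d, f1 x * fderiv ℝ g x v = - ∫ x : Ed d, fderiv ℝ f1 x v * g x := by
    apply integral_mul_fderiv_eq_neg_fderiv_mul_of_integrable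
    · exact ((hf2c.mul (hg.continuous)).integrable_of_hasCompactSupport (hgc.mul_left))
    · exact ((hfd1.continuous.mul hg1s.continuous).integrable_of_hasCompactSupport
        (hg1c.mul_left))
    · exact ((hfd1.continuous.mul hg.continuous).integrable_of_hasCompactSupport (hgc.mul_left))
    · exact fun x _ => hfd1 x
    · exact fun x _ => hg.differentiable (by simp) x
  have e1 : ∫ x : Ed d, f x * secondPartial g j j x = - ∫ x : Ed d, f1 x * g1 x := step1
  have e2 : ∫ x : Ed d, f1 x * g1 x = - ∫ x : Ed d, secondPartial f j j x * g x := step2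
  rw [e1, e2, neg_neg]

lemma ibp_lapl
    (hfd : Differentiable ℝ f)
    (hfd1 : ∀ j : Fin d,
      Differentiable ℝ (fun y : Ed d => fderiv ℝ f y (EuclideanSpace.single j (1:ℝ))))
    (hf2c : ∀ j : Fin d, Continuous (secondPartial f j j))
    (hg : ContDiff ℝ (⊤ : ℕ∞) g) (hgc : HasCompactSupport g) :
    ∫ x : Ed d, f x * lapl g x = ∫ x : Ed d, lapl f x * g x := by
  have h1 : ∫ x : Ed d, f x * lapl g x = ∑ j : Fin d, ∫ x : Ed d, f x * secondPartial g j j x := by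
    unfold lapl
    simp_rw [Finset.mul_sum]
    exact integral_finset_sum _ (fun j _ =>
      ((hfd.continuous.mul (sp_contDiff hg j j).continuous).integrable_of_hasCompactSupport
        ((sp_hcs hgc j j).mul_left)))
  have h2 : ∫ x : Ed d, lapl f x * g x
      = ∑ j : Fin d, ∫ x : Ed d, secondPartial f j j x * g x := by
    unfold lapl
    simp_rw [Finset.sum_mul]
    exact integral_finset_sum _ (fun j _ =>
      (((hf2c j).mul hg.continuous).integrable_of_hasCompactSupport (hgc.mul_left)))
  rw [h1, h2]
  exact Finset.sum_congr rfl fun j _ => ibp_sp f g j hfd (hfd1 j) (hf2c j) hg hgc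

end IBP

end BiLap

open BiLap

/-- For `d ≥ 3`, the distributional bi-Laplacian of `a(x) = |x|` is nonpositive:
for every nonnegative test function `φ`, `∫ |x| Δ²φ(x) dx ≤ 0`. -/
theorem norm_biLaplacian_nonpos (d : ℕ) (hd : 3 ≤ d)
    (φ : EuclideanSpace ℝ (Fin d) → ℝ) (hφ : ContDiff ℝ (⊤ : ℕ∞) φ)
    (hc : HasCompactSupport φ) (hpos : ∀ x, 0 ≤ φ x) :
    (∫ x : EuclideanSpace ℝ (Fin d), ‖x‖ * lapl (lapl φ) x) ≤ 0 := by
  classical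
  have hφl : ContDiff ℝ (⊤ : ℕ∞) (lapl φ) := lapl_contDiff hφ
  have hφlc : HasCompactSupport (lapl φ) := lapl_hcs hc
  set h : Ed d → ℝ := lapl (lapl φ) with hhdef
  have hhc : Continuous h := (lapl_contDiff hφl).continuous
  have hhcs : HasCompactSupport h := lapl_hcs hφlc
  have hInt : Integrable (fun x : Ed d => ‖x‖ * h x) :=
    (continuous_norm.mul hhc).integrable_of_hasCompactSupport hhcs.mul_left
  have hIntAbs : Integrable (fun x : Ed d => |h x|) :=
    hhc.abs.integrable_of_hasCompactSupport hhcs.abs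
  set C := ∫ x : Ed d, |h x| with hCdef
  have hC : 0 ≤ C := integral_nonneg fun x => abs_nonneg _
  have main : ∀ ε : ℝ, 0 < ε → (∫ x : Ed d, ‖x‖ * h x) ≤ ε * C := by
    intro ε hε
    have h1 : ∀ t, 0 ≤ t → HasDerivAt (U0 ε) (U1 ε t) t := fun t ht => hasDerivAt_U0 hε ht
    have h2 : ∀ t, 0 ≤ t → HasDerivAt (U1 ε) (U2 ε t) t := fun t ht => hasDerivAt_U1 hε ht
    have hV1 : ∀ t, 0 ≤ t → HasDerivAt (V0 d ε) (V1 d ε t) t := fun t ht => hasDerivAt_V0 hε ht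
    have hV2 : ∀ t, 0 ≤ t → HasDerivAt (V1 d ε) (V2 d ε t) t := fun t ht => hasDerivAt_V1 hε ht
    set A : Ed d → ℝ := fun z => U0 ε (‖z‖ ^ 2) with hAdef
    set B : Ed d → ℝ := fun z => V0 d ε (‖z‖ ^ 2) with hBdef
    -- continuity helpers
    have hWpos : ∀ x : Ed d, 0 < sqrt (‖x‖ ^ 2 + ε ^ 2) := fun x =>
      Real.sqrt_pos.2 (by positivity)
    have cS : Continuous fun x : Ed d => ‖x‖ ^ 2 := continuous_norm.pow 2
    have cW : Continuous fun x : Ed d => sqrt (‖x‖ ^ 2 + ε ^ 2) :=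
      Real.continuous_sqrt.comp (cS.add continuous_const)
    have cU1 : Continuous fun x : Ed d => U1 ε (‖x‖ ^ 2) := by
      simp only [U1]
      exact (continuous_const.mul cW).inv₀ fun x => by
        have := hWpos x; simp only [Pi.mul_apply, Pi.pow_apply]; positivity
    have cU2 : Continuous fun x : Ed d => U2 ε (‖x‖ ^ 2) := by
      simp only [U2]
      exact ((continuous_const.mul (cW.pow 3)).inv₀ fun x => by
        have := hWpos x; simp only [Pi.mul_apply, Pi.pow_apply]; positivity).neg
    have cU3 : Continuous fun x : Ed d => U3 ε (‖x‖ ^ 2) := by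
      simp only [U3]
      exact continuous_const.mul ((continuous_const.mul (cW.pow 5)).inv₀ fun x => by
        have := hWpos x; simp only [Pi.mul_apply, Pi.pow_apply]; positivity)
    have cU4 : Continuous fun x : Ed d => U4 ε (‖x‖ ^ 2) := by
      simp only [U4]
      exact (continuous_const.mul ((continuous_const.mul (cW.pow 7)).inv₀ fun x => by
        have := hWpos x; simp only [Pi.mul_apply, Pi.pow_apply]; positivity)).neg
    have cV1 : Continuous fun x : Ed d => V1 d ε (‖x‖ ^ 2) := by
      simp only [V1]
      exact (((continuous_const.mul cU2).add
        ((continuous_const.mul cS).mul cU3)).add (continuous_const.mul cU2))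
    have cV2 : Continuous fun x : Ed d => V2 d ε (‖x‖ ^ 2) := by
      simp only [V2]
      exact (((continuous_const.mul cU3).add
        ((continuous_const.mul cS).mul cU4)).add (continuous_const.mul cU3))
    have cCoord : ∀ j : Fin d, Continuous fun x : Ed d => x j := fun j =>
      (EuclideanSpace.proj j : Ed d →L[ℝ] ℝ).continuous
    -- second partials of A and B are continuous
    have hf2cA : ∀ j : Fin d, Continuous (secondPartial A j j) := by
      intro j
      have e : secondPartial A j j
          = fun x => U2 ε (‖x‖ ^ 2) * (2 * x j) ^ 2 + U1 ε (‖x‖ ^ 2) * 2 :=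
        funext fun x => secondPartial_radial h1 h2 j x
      rw [e]
      exact ((cU2.mul ((continuous_const.mul (cCoord j)).pow 2)).add (cU1.mul continuous_const))
    have hf2cB : ∀ j : Fin d, Continuous (secondPartial B j j) := by
      intro j
      have e : secondPartial B j j
          = fun x => V2 d ε (‖x‖ ^ 2) * (2 * x j) ^ 2 + V1 d ε (‖x‖ ^ 2) * 2 :=
        funext fun x => secondPartial_radial hV1 hV2 j x
      rw [e]
      exact ((cV2.mul ((continuous_const.mul (cCoord j)).pow 2)).add (cV1.mul continuous_const))
    -- integration by parts twice
    have e1 : ∫ x : Ed d, A x * lapl (lapl φ) x = ∫ x : Ed d, lapl A x * lapl φ x :=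
      ibp_lapl A (lapl φ) (radial_differentiable h1)
        (fun j => radial_partial_differentiable h1 h2 j) hf2cA hφl hφlc
    have eB : lapl A = B := by
      funext x
      rw [lapl_radial h1 h2 x]
      simp only [hBdef, V0]
      try ring
    have e2 : ∫ x : Ed d, B x * lapl φ x = ∫ x : Ed d, lapl B x * φ x :=
      ibp_lapl B φ (radial_differentiable hV1)
        (fun j => radial_partial_differentiable hV1 hV2 j) hf2cB hφ hc
    have e3 : ∫ x : Ed d, lapl B x * φ x ≤ 0 := by
      apply integral_nonpos
      intro x
      have hB0 : lapl B x ≤ 0 := by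
        rw [lapl_radial hV1 hV2 x]
        exact key_nonpos hε hd (sq_nonneg ‖x‖)
      exact mul_nonpos_iff.2 (Or.inr ⟨hB0, hpos x⟩)
    have eA : ∫ x : Ed d, A x * h x ≤ 0 := by
      rw [hhdef, e1, eB, e2]; exact e3
    -- approximation bound
    have contA : Continuous A := (radial_differentiable h1).continuous
    have hIntA : Integrable (fun x : Ed d => A x * h x) :=
      (contA.mul hhc).integrable_of_hasCompactSupport hhcs.mul_left
    have hIntD : Integrable (fun x : Ed d => (‖x‖ - A x) * h x) :=
      ((continuous_norm.sub contA).mul hhc).integrable_of_hasCompactSupport hhcs.mul_left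
    have split : ∫ x : Ed d, ‖x‖ * h x
        = (∫ x : Ed d, (‖x‖ - A x) * h x) + ∫ x : Ed d, A x * h x := by
      rw [← integral_add hIntD hIntA]
      congr 1
      funext x
      ring
    have pointwise : ∀ x : Ed d, (‖x‖ - A x) * h x ≤ ε * |h x| := by
      intro x
      have hA1 : ‖x‖ ≤ A x := by
        have : ‖x‖ = sqrt (‖x‖ ^ 2) := (Real.sqrt_sq (norm_nonneg x)).symm
        rw [this]
        exact Real.sqrt_le_sqrt (by nlinarith [sq_nonneg ε])
      have hA2 : A x ≤ ‖x‖ + ε := by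
        have h1' : A x ≤ sqrt ((‖x‖ + ε) ^ 2) :=
          Real.sqrt_le_sqrt (by nlinarith [norm_nonneg x, hε.le])
        rwa [Real.sqrt_sq (by positivity)] at h1'
      calc (‖x‖ - A x) * h x ≤ |(‖x‖ - A x) * h x| := le_abs_self _
        _ = |‖x‖ - A x| * |h x| := abs_mul _ _
        _ ≤ ε * |h x| := by
            apply mul_le_mul_of_nonneg_right _ (abs_nonneg _)
            rw [abs_le]
            constructor <;> linarith
    have hub : ∫ x : Ed d, (‖x‖ - A x) * h x ≤ ∫ x : Ed d, ε * |h x| :=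
      integral_mono hIntD (hIntAbs.const_mul ε) pointwise
    have hmul : ∫ x : Ed d, ε * |h x| = ε * C := by
      rw [integral_const_mul]
    linarith [split, hub, eA, hmul]
  by_contra hcon
  push_neg at hcon
  set I := ∫ x : Ed d, ‖x‖ * h x with hIdef
  have hlt := main (I / (2 * (C + 1))) (by positivity)
  have hC1 : (0:ℝ) < C + 1 := by linarith
  have hkey : I / (2 * (C + 1)) * C < I := by
    rw [div_mul_eq_mul_div, div_lt_iff₀ (by positivity)]
    nlinarith [mul_nonneg hcon.le hC]
  linarith
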